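/- arXiv:1911.00864 — 10 statements merged into one kernel-verified Lean document; each statement's English description precedes it below -/
import Mathlib

section
/- Any outcome W that satisfies Comparative PSC (CPSC) is a maximal cost outcome, i.e., w(W) ≤ L and w(W) ≥ w(C') for every feasible subset C' ⊆ C with w(C') ≤ L. -/
open Finset
open scoped Classical

noncomputable section

/-- Each voter's weak preference relation `pref i` is a total preorder. -/
def TotalPreorder {V C : Type} (pref : V → C → C → Prop) : Prop :=
  (∀ i a b, pref i a b ∨ pref i b a) ∧
  (∀ i a b c, pref i a b → pref i b c → pref i a c)

/-- `nth i j` is voter `i`'s `(j+1)`-th most preferred candidate under a fixed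
tie-breaking: an enumeration of all candidates consistent with `pref i`. -/
def TieBreak {V C : Type} [Fintype C] (pref : V → C → C → Prop) (nth : V → ℕ → C) : Prop :=
  (∀ i c, ∃ j, j < Fintype.card C ∧ nth i j = c) ∧
  (∀ i j j', j ≤ j' → pref i (nth i j) (nth i j'))

/-- `N'` solidly supports `C'`: every voter in `N'` weakly prefers every member of `C'`
to every non-member. -/
def Solid {V C : Type} (pref : V → C → C → Prop) (N' : Finset V) (C' : Finset C) : Prop :=
  ∀ i ∈ N', ∀ c' ∈ C', ∀ c, c ∉ C' → pref i c' c

/-- `P(N',C') = {c : ∃ i ∈ N', c ≿_i c^{(i,|C'|)}}` where `c^{(i,j)} = nth i (j-1)`. -/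
def Pset {V C : Type} [Fintype C] (pref : V → C → C → Prop) (nth : V → ℕ → C)
    (N' : Finset V) (C' : Finset C) : Finset C :=
  Finset.univ.filter fun c => ∃ i ∈ N', pref i c (nth i (C'.card - 1))

/-- total cost of a set of candidates -/
def cost {C : Type} (w : C → ℝ) (S : Finset C) : ℝ := ∑ c ∈ S, w c

/-- Comparative PSC for PB with general (weak) preferences. -/
def CPSC {V C : Type} [Fintype V] [Fintype C] (pref : V → C → C → Prop) (nth : V → ℕ → C)
    (b : V → ℝ) (w : C → ℝ) (L : ℝ) (W : Finset C) : Prop :=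
  ¬ ∃ (N' : Finset V) (C' : Finset C), Solid pref N' C' ∧
      cost w (Pset pref nth N' C' ∩ W) < (∑ i ∈ N', b i) * L / (Fintype.card V : ℝ) ∧
      ∃ C'' ⊆ C', cost w (Pset pref nth N' C' ∩ W) < cost w C'' ∧
        cost w C'' ≤ (∑ i ∈ N', b i) * L / (Fintype.card V : ℝ)

/-- Inclusion PSC for PB with general (weak) preferences. -/
def IPSC {V C : Type} [Fintype V] [Fintype C] (pref : V → C → C → Prop) (nth : V → ℕ → C)
    (b : V → ℝ) (w : C → ℝ) (L : ℝ) (W : Finset C) : Prop :=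
  ¬ ∃ (N' : Finset V) (C' : Finset C), Solid pref N' C' ∧
      cost w (Pset pref nth N' C' ∩ W) < (∑ i ∈ N', b i) * L / (Fintype.card V : ℝ) ∧
      ∃ c ∈ C', c ∉ Pset pref nth N' C' ∩ W ∧
        cost w (insert c (Pset pref nth N' C' ∩ W)) ≤ (∑ i ∈ N', b i) * L / (Fintype.card V : ℝ)

/-- `W` is exhaustive w.r.t. budget limit `L`. -/
def Exhaustive {C : Type} (w : C → ℝ) (L : ℝ) (W : Finset C) : Prop :=
  cost w W ≤ L ∧ ∀ c, c ∉ W → L < cost w (insert c W)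

/-- `W` is a maximal cost outcome w.r.t. budget limit `L`. -/
def MaximalCost {C : Type} (w : C → ℝ) (L : ℝ) (W : Finset C) : Prop :=
  cost w W ≤ L ∧ ∀ C' : Finset C, cost w C' ≤ L → cost w C' ≤ cost w W

/-- dichotomous preferences with approval sets `A i` -/
def Dichotomous {V C : Type} (pref : V → C → C → Prop) (A : V → Finset C) : Prop :=
  ∀ i a c, pref i a c ↔ (a ∈ A i ∨ c ∉ A i)

/-- `⋃_{i ∈ N'} A i` -/
def unionA {V C : Type} [Fintype C] (A : V → Finset C) (N' : Finset V) : Finset C :=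
  Finset.univ.filter fun c => ∃ i ∈ N', c ∈ A i

/-- `⋂_{i ∈ N'} A i` -/
def interA {V C : Type} [Fintype C] (A : V → Finset C) (N' : Finset V) : Finset C :=
  Finset.univ.filter fun c => ∀ i ∈ N', c ∈ A i

/-
The grand coalition `N` solidly supports the whole candidate set `C`, and since every candidate is
weakly preferred to each voter's last-ranked one, `P(N, C) = C`. The CPSC condition for `(N, C)`
therefore compares `w(W)` directly with every `C'' ⊆ C` of cost at most `b(N) · L / n = L`.
-/

theorem solid_univ {V C : Type} [Fintype C] (pref : V → C → C → Prop) (N' : Finset V) :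
    Solid pref N' univ :=
  fun _ _ _ _ c hc => absurd (mem_univ c) hc

theorem pset_univ {V C : Type} [Fintype C] {pref : V → C → C → Prop} {nth : V → ℕ → C}
    (hnth : TieBreak pref nth) {N' : Finset V} (hN' : N'.Nonempty) :
    Pset pref nth N' univ = univ := by
  obtain ⟨i, hi⟩ := hN'
  refine eq_univ_of_forall fun c => mem_filter.2 ⟨mem_univ c, i, hi, ?_⟩
  obtain ⟨j, hj, rfl⟩ := hnth.1 i c
  exact hnth.2 i j _ (by rw [card_univ]; omega)

theorem CPSC.cost_le_of_cost_le_quota {V C : Type} [Fintype V] [Fintype C]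
    {pref : V → C → C → Prop} {nth : V → ℕ → C} {b : V → ℝ} {w : C → ℝ} {L : ℝ} {W : Finset C}
    (hCPSC : CPSC pref nth b w L W) (hnth : TieBreak pref nth) {N' : Finset V}
    (hN' : N'.Nonempty) {C'' : Finset C}
    (hC'' : cost w C'' ≤ (∑ i ∈ N', b i) * L / (Fintype.card V : ℝ)) :
    cost w C'' ≤ cost w W := by
  by_contra! hlt
  rw [← univ_inter W, ← pset_univ hnth hN'] at hlt
  exact hCPSC ⟨N', univ, solid_univ pref N', hlt.trans_le hC'', C'', subset_univ _, hlt, hC''⟩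

theorem cpsc_implies_maximal_cost_general {V C : Type} [Fintype V] [Fintype C] [Nonempty V]
    (pref : V → C → C → Prop) (nth : V → ℕ → C) (b : V → ℝ) (w : C → ℝ) (L : ℝ)
    (hnth : TieBreak pref nth)
    (hbsum : (∑ i, b i) = (Fintype.card V : ℝ))
    (W : Finset C) (hWL : cost w W ≤ L)
    (hCPSC : CPSC pref nth b w L W) :
    MaximalCost w L W := by
  have hquota : (∑ i, b i) * L / (Fintype.card V : ℝ) = L := by
    rw [hbsum, mul_div_cancel_left₀ L (Nat.cast_ne_zero.2 Fintype.card_ne_zero)]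
  refine ⟨hWL, fun C' hC' => hCPSC.cost_le_of_cost_le_quota hnth univ_nonempty ?_⟩
  rwa [hquota]

/-- Any outcome satisfying CPSC is a maximal cost outcome. -/
theorem cpsc_implies_maximal_cost {V C : Type} [Fintype V] [Fintype C] [Nonempty V]
    (pref : V → C → C → Prop) (nth : V → ℕ → C) (b : V → ℝ) (w : C → ℝ) (L : ℝ)
    (hpref : TotalPreorder pref) (hnth : TieBreak pref nth)
    (hb : ∀ i, 0 < b i) (hbsum : (∑ i, b i) = (Fintype.card V : ℝ))
    (hw : ∀ c, 0 < w c) (hL : 0 < L)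
    (W : Finset C) (hWL : cost w W ≤ L)
    (hCPSC : CPSC pref nth b w L W) :
    MaximalCost w L W :=
  cpsc_implies_maximal_cost_general pref nth b w L hnth hbsum W hWL hCPSC
end
end

section
/- Any outcome W that satisfies Inclusion PSC (IPSC) is exhaustive, i.e., w(W) ≤ L and for every candidate c ∈ C \ W, w(W ∪ {c}) > L. -/
open Finset
open scoped Classical

noncomputable section

/-! The whole electorate solidly supports the whole candidate set, and for that pair
`P(N, C) ∩ W = W` and the budget share is `L`; so an outcome with room for one more candidate
violates IPSC already on this group. -/

theorem Solid.univ {V C : Type} [Fintype C] (pref : V → C → C → Prop) (N' : Finset V) :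
    Solid pref N' (Finset.univ : Finset C) :=
  fun _ _ _ _ c hc => absurd (mem_univ c) hc

theorem TieBreak.pref_nth_card_sub_one {V C : Type} [Fintype C] {pref : V → C → C → Prop}
    {nth : V → ℕ → C} (hnth : TieBreak pref nth) (i : V) (c : C) :
    pref i c (nth i (Fintype.card C - 1)) := by
  obtain ⟨j, hj, rfl⟩ := hnth.1 i c
  exact hnth.2 i j _ (Nat.le_sub_one_of_lt hj)

theorem Pset_univ {V C : Type} [Fintype C] {pref : V → C → C → Prop} {nth : V → ℕ → C}
    (hnth : TieBreak pref nth) {N' : Finset V} (hN' : N'.Nonempty) :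
    Pset pref nth N' Finset.univ = Finset.univ := by
  obtain ⟨i, hi⟩ := hN'
  refine eq_univ_of_forall fun c => mem_filter.mpr ⟨mem_univ c, i, hi, ?_⟩
  rw [card_univ]
  exact hnth.pref_nth_card_sub_one i c

theorem cost_insert {C : Type} (w : C → ℝ) {S : Finset C} {c : C} (hc : c ∉ S) :
    cost w (insert c S) = w c + cost w S :=
  sum_insert hc

theorem IPSC.lt_cost_insert {V C : Type} [Fintype V] [Fintype C] [Nonempty V]
    {pref : V → C → C → Prop} {nth : V → ℕ → C} {b : V → ℝ} {w : C → ℝ} {L : ℝ} {W : Finset C}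
    (hIPSC : IPSC pref nth b w L W) (hnth : TieBreak pref nth)
    (hbsum : (∑ i, b i) = (Fintype.card V : ℝ)) (hW : cost w W < L) {c : C} (hc : c ∉ W) :
    L < cost w (insert c W) := by
  have hshare : (∑ i ∈ Finset.univ, b i) * L / (Fintype.card V : ℝ) = L := by
    rw [hbsum, mul_div_cancel_left₀ L (Nat.cast_ne_zero.mpr Fintype.card_ne_zero)]
  have hPW : Pset pref nth Finset.univ Finset.univ ∩ W = W := by
    rw [Pset_univ hnth univ_nonempty, univ_inter]
  by_contra! hle
  exact hIPSC ⟨univ, univ, Solid.univ pref _, by rwa [hPW, hshare], c, mem_univ c,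
    by rwa [hPW], by rwa [hPW, hshare]⟩

theorem ipsc_implies_exhaustive_general {V C : Type} [Fintype V] [Fintype C] [Nonempty V]
    (pref : V → C → C → Prop) (nth : V → ℕ → C) (b : V → ℝ) (w : C → ℝ) (L : ℝ)
    (hnth : TieBreak pref nth)
    (hbsum : (∑ i, b i) = (Fintype.card V : ℝ))
    (hw : ∀ c, 0 < w c)
    (W : Finset C) (hWL : cost w W ≤ L)
    (hIPSC : IPSC pref nth b w L W) :
    Exhaustive w L W := by
  refine ⟨hWL, fun c hc => ?_⟩
  by_contra! hle
  have hW : cost w W < L := by linarith [cost_insert w hc, hw c]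
  exact hle.not_gt (hIPSC.lt_cost_insert hnth hbsum hW hc)

/-- Any outcome satisfying IPSC is exhaustive. -/
theorem ipsc_implies_exhaustive {V C : Type} [Fintype V] [Fintype C] [Nonempty V]
    (pref : V → C → C → Prop) (nth : V → ℕ → C) (b : V → ℝ) (w : C → ℝ) (L : ℝ)
    (hpref : TotalPreorder pref) (hnth : TieBreak pref nth)
    (hb : ∀ i, 0 < b i) (hbsum : (∑ i, b i) = (Fintype.card V : ℝ))
    (hw : ∀ c, 0 < w c) (hL : 0 < L)
    (W : Finset C) (hWL : cost w W ≤ L)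
    (hIPSC : IPSC pref nth b w L W) :
    Exhaustive w L W :=
  ipsc_implies_exhaustive_general pref nth b w L hnth hbsum hw W hWL hIPSC
end
end

section
/- For participatory budgeting with ordinal preferences, IPSC does not imply CPSC: there exists a PB instance with 4 unit-weight voters, candidates {a,b,c} with w(a)=w(c)=1, w(b)=0.9, budget L=2, dichotomous preferences A_1={a,b}, A_2={a}, A_3=A_4={c}, and an outcome W={c,b} that satisfies IPSC but violates CPSC. -/
open Finset
open scoped Classical

noncomputable section

/-- approvals: candidates a=0, b=1, c=2; voters 1: {a,b}, 2: {a}, 3,4: {c} -/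
def A2 : Fin 4 → Finset (Fin 3) := ![{0, 1}, {0}, {2}, {2}]

/-- dichotomous preferences induced by `A2` -/
def pref2 : Fin 4 → Fin 3 → Fin 3 → Prop := fun i a c => a ∈ A2 i ∨ c ∉ A2 i

/-- costs w(a)=1, w(b)=0.9, w(c)=1 -/
def w2 : Fin 3 → ℝ := ![1, 9 / 10, 1]

/-!
Voters 1 and 2 solidly support `{a}`, and voter 1 is indifferent between `a` and `b`, so
`P({1,2},{a}) ∩ W = {b}` costs `0.9`, less than their share `1` of the budget. They could afford
`{a}`, which costs more than `{b}`: CPSC fails. IPSC, however, only lets them add a candidate to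
`{b}`, and `{a,b}` costs `1.9 > 1`. Checking all coalitions shows that no solid coalition can
afford adding any of its candidates to what it already gets.
-/

section Approval

variable {V C : Type}

theorem totalPreorder_of_dichotomous {pref : V → C → C → Prop} {A : V → Finset C}
    (h : Dichotomous pref A) : TotalPreorder pref := by
  refine ⟨fun i a c => ?_, fun i a b c => ?_⟩ <;> simp only [h _ _ _] <;> tauto

def approvalPset [Fintype C] [DecidableEq C] (A : V → Finset C) (nth : V → ℕ → C)
    (N' : Finset V) (C' : Finset C) : Finset C :=
  {c | ∃ i ∈ N', c ∈ A i ∨ nth i (#C' - 1) ∉ A i}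

theorem Pset_eq_approvalPset [Fintype C] [DecidableEq C] {pref : V → C → C → Prop}
    {A : V → Finset C} (h : Dichotomous pref A) (nth : V → ℕ → C) (N' : Finset V)
    (C' : Finset C) :
    Pset pref nth N' C' = approvalPset A nth N' C' := by
  ext c
  simp [Pset, approvalPset, h _ _ _]

end Approval

section TieBreak

variable {V C : Type} {n : ℕ}

def clampNth (r : V → Fin (n + 1) → C) (i : V) (j : ℕ) : C :=
  r i ⟨min j n, by omega⟩

theorem tieBreak_clampNth [Fintype C] {pref : V → C → C → Prop} {r : V → Fin (n + 1) → C}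
    (hcard : Fintype.card C = n + 1) (hsurj : ∀ i, Function.Surjective (r i))
    (hmono : ∀ i k k', k ≤ k' → pref i (r i k) (r i k')) :
    TieBreak pref (clampNth r) := by
  refine ⟨fun i c => ?_, fun i j j' hj => hmono i _ _ ?_⟩
  · obtain ⟨k, rfl⟩ := hsurj i c
    exact ⟨k, hcard.symm ▸ k.isLt, by simp [clampNth, k.is_le]⟩
  · simp only [Fin.mk_le_mk]
    omega

end TieBreak

section Proportionality

variable {V C : Type} [Fintype V] [Fintype C] [DecidableEq C] {pref : V → C → C → Prop}
  {nth : V → ℕ → C} {b : V → ℝ} {w : C → ℝ} {L : ℝ} {W : Finset C}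

theorem ipsc_of_forall_budget_lt_cost_insert
    (h : ∀ N' C', Solid pref N' C' → ∀ x ∈ C', x ∉ Pset pref nth N' C' ∩ W →
      (∑ i ∈ N', b i) * L / Fintype.card V < cost w (insert x (Pset pref nth N' C' ∩ W))) :
    IPSC pref nth b w L W := by
  -- `IPSC` and `CPSC` are stated with the classical `DecidableEq`, which every instance equals.
  obtain rfl : ‹DecidableEq C› = fun a b => Classical.propDecidable (a = b) :=
    Subsingleton.elim _ _
  rintro ⟨N', C', hsolid, -, x, hx, hxS, hle⟩
  exact (h N' C' hsolid x hx hxS).not_ge hle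

theorem not_cpsc_of_affordable_subset {N' : Finset V} {C' C'' : Finset C}
    (hsolid : Solid pref N' C') (hsub : C'' ⊆ C')
    (hlt : cost w (Pset pref nth N' C' ∩ W) < cost w C'')
    (hle : cost w C'' ≤ (∑ i ∈ N', b i) * L / Fintype.card V) :
    ¬ CPSC pref nth b w L W := by
  obtain rfl : ‹DecidableEq C› = fun a b => Classical.propDecidable (a = b) :=
    Subsingleton.elim _ _
  exact fun hcpsc => hcpsc ⟨N', C', hsolid, hlt.trans_le hle, C'', hsub, hlt, hle⟩

end Proportionality

def rank2 : Fin 4 → Fin 3 → Fin 3 := ![![0, 1, 2], ![0, 1, 2], ![2, 0, 1], ![2, 0, 1]]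

theorem rank2_surjective (i : Fin 4) : Function.Surjective (rank2 i) := by
  revert i
  decide

theorem rank2_monotone (i : Fin 4) (k k' : Fin 3) (h : k ≤ k') :
    pref2 i (rank2 i k) (rank2 i k') := by
  unfold pref2
  revert i k k'
  decide

def w10 : Fin 3 → ℕ := ![10, 9, 10]

theorem w2_eq_div (c : Fin 3) : w2 c = w10 c / 10 := by
  fin_cases c <;> norm_num [w2, w10]

theorem cost_w2 (S : Finset (Fin 3)) : cost w2 S = (∑ c ∈ S, w10 c : ℕ) / 10 := by
  simp [cost, w2_eq_div, Finset.sum_div]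

/-- Costs are in tenths: the budget share `#N' * 2 / 4` of a coalition is below `s / 10` iff
`10 * #N' < 2 * s`. -/
theorem budget_lt_cost_insert (N' : Finset (Fin 4)) (C' : Finset (Fin 3))
    (hsolid : Solid pref2 N' C') (x : Fin 3) (hx : x ∈ C')
    (hxS : x ∉ approvalPset A2 (clampNth rank2) N' C' ∩ {2, 1}) :
    10 * #N' < 2 * ∑ c ∈ insert x (approvalPset A2 (clampNth rank2) N' C' ∩ {2, 1}), w10 c := by
  unfold Solid pref2 at hsolid
  revert N' C' x
  decide

/-- IPSC does not imply CPSC: the outcome W={c,b} satisfies IPSC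
but violates CPSC in this instance (unit voter budgets, L=2). -/
theorem ipsc_not_implies_cpsc :
    ∃ nth : Fin 4 → ℕ → Fin 3,
      TotalPreorder pref2 ∧ TieBreak pref2 nth ∧ Dichotomous pref2 A2 ∧
      IPSC pref2 nth (fun _ => (1 : ℝ)) w2 2 ({2, 1} : Finset (Fin 3)) ∧
      ¬ CPSC pref2 nth (fun _ => (1 : ℝ)) w2 2 ({2, 1} : Finset (Fin 3)) := by
  have hdich : Dichotomous pref2 A2 := fun _ _ _ => Iff.rfl
  refine ⟨clampNth rank2, totalPreorder_of_dichotomous hdich,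
    tieBreak_clampNth (by simp) rank2_surjective rank2_monotone, hdich, ?_, ?_⟩
  · refine ipsc_of_forall_budget_lt_cost_insert fun N' C' hsolid x hx hxS => ?_
    rw [Pset_eq_approvalPset hdich] at hxS ⊢
    have hlt : (10 * #N' : ℝ) < 2 * (∑ c ∈ insert x (approvalPset A2 (clampNth rank2) N' C' ∩
        {2, 1}), w10 c : ℕ) := by
      exact_mod_cast budget_lt_cost_insert N' C' hsolid x hx hxS
    simp only [cost_w2, sum_const, nsmul_eq_mul, mul_one, Fintype.card_fin]
    linarith
  · have hsolid : Solid pref2 {0, 1} {0} := by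
      unfold Solid pref2
      decide
    have hP : approvalPset A2 (clampNth rank2) {0, 1} {0} ∩ {2, 1} = {1} := by decide
    refine not_cpsc_of_affordable_subset hsolid subset_rfl ?_ (by norm_num [cost, w2])
    rw [Pset_eq_approvalPset hdich, hP]
    norm_num [cost, w2]
end
end

section
/- Suppose all voters have dichotomous preferences (approval ballots A_i). An outcome W satisfies CPSC if and only if (i) there is no set N' ⊆ N of voters and subset C'' ⊆ ⋂_{i∈N'} A_i with w(C'') ≤ b(N')·L/n but w(W ∩ ⋃_{i∈N'} A_i) < w(C''), and (ii) W is a maximal cost outcome. -/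
open Finset
open scoped Classical

noncomputable section

set_option linter.unusedSectionVars false

section Aux

variable {V C : Type} [Fintype V] [Fintype C]

lemma cost_nonneg {w : C → ℝ} (hw : ∀ c, 0 < w c) (S : Finset C) : 0 ≤ cost w S :=
  Finset.sum_nonneg fun c _ => (hw c).le

lemma cost_mono {w : C → ℝ} (hw : ∀ c, 0 < w c) {S T : Finset C} (h : S ⊆ T) :
    cost w S ≤ cost w T :=
  Finset.sum_le_sum_of_subset_of_nonneg h fun c _ _ => (hw c).le

lemma prefix_mem {pref : V → C → C → Prop} {nth : V → ℕ → C} {A : V → Finset C}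
    (hnth : TieBreak pref nth) (hdich : Dichotomous pref A)
    {i : V} {j k : ℕ} (hjk : j ≤ k) (hk : nth i k ∈ A i) : nth i j ∈ A i := by
  have h := hnth.2 i j k hjk
  rcases (hdich i _ _).1 h with h' | h'
  · exact h'
  · exact absurd hk h'

lemma nth_mem_of_lt_card {pref : V → C → C → Prop} {nth : V → ℕ → C} {A : V → Finset C}
    (hnth : TieBreak pref nth) (hdich : Dichotomous pref A)
    {i : V} {k : ℕ} (hk : k < (A i).card) : nth i k ∈ A i := by
  by_contra hcon
  set S := (Finset.range (Fintype.card C)).filter (fun j => nth i j ∈ A i) with hS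
  have hcard : (A i).card ≤ S.card := by
    apply Finset.card_le_card_of_injOn (fun c => Classical.choose (hnth.1 i c))
    · intro c hc
      have h1 := Classical.choose_spec (hnth.1 i c)
      simp only [hS, Finset.mem_coe, Finset.mem_filter, Finset.mem_range]
      exact ⟨h1.1, h1.2.symm ▸ hc⟩
    · intro c _ c' _ heq
      have h1 := (Classical.choose_spec (hnth.1 i c)).2
      have h2 := (Classical.choose_spec (hnth.1 i c')).2
      rw [← h1, ← h2]
      exact congrArg (nth i) heq
  have hsubk : S ⊆ Finset.range k := by
    intro j hj
    simp only [hS, Finset.mem_filter, Finset.mem_range] at hj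
    rw [Finset.mem_range]
    by_contra hjk
    push_neg at hjk
    exact hcon (prefix_mem hnth hdich hjk hj.2)
  have h2 := Finset.card_le_card hsubk
  rw [Finset.card_range] at h2
  omega

lemma nth_injOn {pref : V → C → C → Prop} {nth : V → ℕ → C}
    (hnth : TieBreak pref nth) (i : V) :
    Set.InjOn (nth i) ↑(Finset.range (Fintype.card C)) := by
  have himg : (Finset.range (Fintype.card C)).image (nth i) = Finset.univ := by
    apply Finset.eq_univ_of_forall
    intro c
    obtain ⟨j, hj, hje⟩ := hnth.1 i c
    exact Finset.mem_image.mpr ⟨j, Finset.mem_range.mpr hj, hje⟩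
  have h : ((Finset.range (Fintype.card C)).image (nth i)).card
      = (Finset.range (Fintype.card C)).card := by
    rw [himg, Finset.card_range, Finset.card_univ]
  exact Finset.card_image_iff.1 h

lemma card_le_Acard {pref : V → C → C → Prop} {nth : V → ℕ → C} {A : V → Finset C}
    (hnth : TieBreak pref nth) (hdich : Dichotomous pref A)
    {i : V} {m : ℕ} (hm : 0 < m) (hmc : m ≤ Fintype.card C)
    (h : nth i (m - 1) ∈ A i) : m ≤ (A i).card := by
  have hsub : (Finset.range m).image (nth i) ⊆ A i := by
    intro c hc
    obtain ⟨j, hj, rfl⟩ := Finset.mem_image.mp hc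
    rw [Finset.mem_range] at hj
    exact prefix_mem hnth hdich (by omega : j ≤ m - 1) h
  have hinj : Set.InjOn (nth i) ↑(Finset.range m) := by
    apply (nth_injOn hnth i).mono
    intro x hx
    simp only [Finset.coe_range, Set.mem_Iio] at hx ⊢
    omega
  have hcard : ((Finset.range m).image (nth i)).card = m := by
    rw [Finset.card_image_of_injOn hinj, Finset.card_range]
  calc m = ((Finset.range m).image (nth i)).card := hcard.symm
    _ ≤ (A i).card := Finset.card_le_card hsub

lemma Pset_eq_unionA {pref : V → C → C → Prop} {nth : V → ℕ → C} {A : V → Finset C}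
    (hdich : Dichotomous pref A) {N' : Finset V} {C' : Finset C}
    (h : ∀ i ∈ N', nth i (C'.card - 1) ∈ A i) :
    Pset pref nth N' C' = unionA A N' := by
  ext c
  simp only [Pset, unionA, Finset.mem_filter, Finset.mem_univ, true_and]
  constructor
  · rintro ⟨i, hi, hp⟩
    rcases (hdich i c _).1 hp with hc | hc
    · exact ⟨i, hi, hc⟩
    · exact absurd (h i hi) hc
  · rintro ⟨i, hi, hc⟩
    exact ⟨i, hi, (hdich i c _).2 (Or.inl hc)⟩

lemma Pset_eq_univ {pref : V → C → C → Prop} {nth : V → ℕ → C} {A : V → Finset C}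
    (hdich : Dichotomous pref A) {N' : Finset V} {C' : Finset C}
    {i : V} (hi : i ∈ N') (h : nth i (C'.card - 1) ∉ A i) :
    Pset pref nth N' C' = Finset.univ := by
  apply Finset.eq_univ_of_forall
  intro c
  simp only [Pset, Finset.mem_filter, Finset.mem_univ, true_and]
  exact ⟨i, hi, (hdich i c _).2 (Or.inr h)⟩

end Aux

/-- characterization of CPSC under dichotomous preferences. -/
theorem cpsc_approval_characterization {V C : Type} [Fintype V] [Fintype C] [Nonempty V]
    (pref : V → C → C → Prop) (nth : V → ℕ → C) (A : V → Finset C)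
    (b : V → ℝ) (w : C → ℝ) (L : ℝ)
    (hpref : TotalPreorder pref) (hnth : TieBreak pref nth) (hdich : Dichotomous pref A)
    (hb : ∀ i, 0 < b i) (hbsum : (∑ i, b i) = (Fintype.card V : ℝ))
    (hw : ∀ c, 0 < w c) (hL : 0 < L)
    (W : Finset C) (hWL : cost w W ≤ L) :
    CPSC pref nth b w L W ↔
      ((¬ ∃ (N' : Finset V) (C'' : Finset C), C'' ⊆ interA A N' ∧
          cost w C'' ≤ (∑ i ∈ N', b i) * L / (Fintype.card V : ℝ) ∧
          cost w (W ∩ unionA A N') < cost w C'') ∧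
        MaximalCost w L W) := by
  have hn : (0 : ℝ) < (Fintype.card V : ℝ) := by
    exact_mod_cast Fintype.card_pos
  constructor
  · -- CPSC → (i) ∧ MaximalCost
    intro hC
    constructor
    · rintro ⟨N', C'', hsub, hle, hlt⟩
      apply hC
      have h0 : 0 ≤ cost w (W ∩ unionA A N') := cost_nonneg hw _
      have hCpos : 0 < cost w C'' := lt_of_le_of_lt h0 hlt
      have hC''ne : C''.Nonempty := by
        rw [Finset.nonempty_iff_ne_empty]
        rintro rfl
        simp [cost] at hCpos
      have hIne : (interA A N').Nonempty := hC''ne.mono hsub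
      have hkey : ∀ i ∈ N', nth i ((interA A N').card - 1) ∈ A i := by
        intro i hi
        apply nth_mem_of_lt_card hnth hdich
        have hsubA : interA A N' ⊆ A i := by
          intro c hc
          simp only [interA, Finset.mem_filter] at hc
          exact hc.2 i hi
        have := Finset.card_le_card hsubA
        have := Finset.card_pos.mpr hIne
        omega
      have hsolid : Solid pref N' (interA A N') := by
        intro i hi c' hc' c _
        refine (hdich i c' c).2 (Or.inl ?_)
        simp only [interA, Finset.mem_filter] at hc'
        exact hc'.2 i hi
      have hPeq : Pset pref nth N' (interA A N') = unionA A N' :=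
        Pset_eq_unionA hdich hkey
      refine ⟨N', interA A N', hsolid, ?_, C'', hsub, ?_, hle⟩
      · rw [hPeq, Finset.inter_comm]
        exact lt_of_lt_of_le hlt hle
      · rw [hPeq, Finset.inter_comm]
        exact hlt
    · refine ⟨hWL, ?_⟩
      intro C' hC'
      by_contra hlt
      push_neg at hlt
      apply hC
      have hq : (∑ i ∈ (Finset.univ : Finset V), b i) * L / (Fintype.card V : ℝ) = L := by
        rw [hbsum, mul_comm, mul_div_assoc, div_self (ne_of_gt hn), mul_one]
      have hPW : cost w (Pset pref nth Finset.univ (Finset.univ : Finset C) ∩ W) ≤ cost w W :=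
        cost_mono hw Finset.inter_subset_right
      refine ⟨Finset.univ, Finset.univ, ?_, ?_, C', Finset.subset_univ _, ?_, ?_⟩
      · intro i _ c' _ c hc
        exact absurd (Finset.mem_univ c) hc
      · rw [hq]; exact lt_of_le_of_lt hPW (lt_of_lt_of_le hlt hC')
      · exact lt_of_le_of_lt hPW hlt
      · rw [hq]; exact hC'
  · -- (i) ∧ MaximalCost → CPSC
    rintro ⟨hi, hmax⟩ ⟨N', C', hsolid, hPq, C'', hsub'', hlt'', hle''⟩
    have h0 : 0 ≤ cost w (Pset pref nth N' C' ∩ W) := cost_nonneg hw _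
    have hCpos : 0 < cost w C'' := lt_of_le_of_lt h0 hlt''
    have hC''ne : C''.Nonempty := by
      rw [Finset.nonempty_iff_ne_empty]
      rintro rfl
      simp [cost] at hCpos
    have hC'ne : C'.Nonempty := hC''ne.mono hsub''
    by_cases hall : ∀ i ∈ N', nth i (C'.card - 1) ∈ A i
    · -- Pset = unionA; derive C' ⊆ interA
      have hPeq : Pset pref nth N' C' = unionA A N' := Pset_eq_unionA hdich hall
      have hC'sub : ∀ i ∈ N', C' ⊆ A i := by
        intro i hi
        have hcard : C'.card ≤ (A i).card := by
          apply card_le_Acard hnth hdich (Finset.card_pos.mpr hC'ne)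
            (Finset.card_le_univ C' |>.trans_eq (Finset.card_univ)) (hall i hi)
        intro c' hc'
        by_contra hc'A
        have hAsub : A i ⊆ C' := by
          intro a ha
          by_contra haC'
          have := hsolid i hi c' hc' a haC'
          rcases (hdich i c' a).1 this with h | h
          · exact hc'A h
          · exact h ha
        have : A i = C' := Finset.eq_of_subset_of_card_le hAsub hcard
        exact hc'A (this ▸ hc')
      apply hi
      refine ⟨N', C'', ?_, hle'', ?_⟩
      · intro c hc
        simp only [interA, Finset.mem_filter, Finset.mem_univ, true_and]
        exact fun i hi' => hC'sub i hi' (hsub'' hc)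
      · rw [← Finset.inter_comm, ← hPeq]
        exact hlt''
    · -- Pset = univ; contradicts MaximalCost
      push_neg at hall
      obtain ⟨i, hiN, hiA⟩ := hall
      have hPeq : Pset pref nth N' C' = Finset.univ := Pset_eq_univ hdich hiN hiA
      have hsumle : (∑ i ∈ N', b i) ≤ (Fintype.card V : ℝ) := by
        rw [← hbsum]
        exact Finset.sum_le_sum_of_subset_of_nonneg (Finset.subset_univ N')
          (fun i _ _ => (hb i).le)
      have hqL : (∑ i ∈ N', b i) * L / (Fintype.card V : ℝ) ≤ L := by
        rw [div_le_iff₀ hn]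
        nlinarith
      have hC''L : cost w C'' ≤ L := hle''.trans hqL
      have := hmax.2 C'' hC''L
      rw [hPeq, Finset.univ_inter] at hlt''
      linarith
end
end

section
/- There exists a PB instance with one voter and strict preferences in which no outcome satisfies CPSC: one voter with strict preferences a ≻ b ≻ c ≻ d, budget L = 4, and weights w(a) = 3, w(b) = w(c) = w(d) = 2 admits no CPSC outcome. -/
/-
With a single voter the prefixes `{a}` and `{a, b, c}` of her ranking are solidly supported, each
with quota `L = 4`. An outcome of cost at most 4 containing `a` (cost 3) has room for nothing else,
so it funds only `a` out of `{a, b, c}`, although `{b, c}` costs 4 > 3 and fits the quota. An outcome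
without `a` funds nothing of `{a}`, although `{a}` fits the quota.
-/

open Finset
open scoped Classical

noncomputable section

/-- the single voter's strict preference a ≻ b ≻ c ≻ d (a=0,b=1,c=2,d=3) -/
def pref6 : Fin 1 → Fin 4 → Fin 4 → Prop := fun _ a c => a ≤ c

/-- tie-breaking enumeration for the strict order -/
def nth6 : Fin 1 → ℕ → Fin 4 := fun _ j => ⟨min j 3, by omega⟩

/-- costs w(a)=3, w(b)=w(c)=w(d)=2 -/
def w6 : Fin 4 → ℝ := ![3, 2, 2, 2]

theorem not_CPSC_of_cost_lt {V C : Type} [Fintype V] [Fintype C] {pref : V → C → C → Prop}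
    {nth : V → ℕ → C} {b : V → ℝ} {w : C → ℝ} {L : ℝ} {W : Finset C} {N' : Finset V}
    {C' C'' : Finset C} (hsolid : Solid pref N' C') (hsub : C'' ⊆ C')
    (hlt : cost w (Pset pref nth N' C' ∩ W) < cost w C'')
    (hle : cost w C'' ≤ (∑ i ∈ N', b i) * L / (Fintype.card V : ℝ)) :
    ¬ CPSC pref nth b w L W :=
  fun h => h ⟨N', C', hsolid, hlt.trans_le hle, C'', hsub, hlt, hle⟩

theorem totalPreorder_pref6 : TotalPreorder pref6 :=
  ⟨fun _ => le_total, fun _ _ _ _ => le_trans⟩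

theorem nth6_val (i : Fin 1) (k : Fin 4) : nth6 i k = k := by
  ext
  simp only [nth6]
  omega

theorem tieBreak_pref6_nth6 : TieBreak pref6 nth6 :=
  ⟨fun i c => ⟨c, c.isLt, nth6_val i c⟩,
    fun _ _ _ h => by simp only [pref6, nth6, Fin.mk_le_mk]; omega⟩

theorem solid_pref6_Iic (k : Fin 4) : Solid pref6 {0} (Iic k) := by
  intro _ _ c' hc' c hc
  rw [mem_Iic] at hc' hc
  exact hc'.trans (not_le.1 hc).le

theorem Pset_pref6_Iic (k : Fin 4) : Pset pref6 nth6 {0} (Iic k) = Iic k := by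
  ext c
  simp [Pset, pref6, Fin.card_Iic, nth6_val]

theorem eq_singleton_zero_of_cost_w6_le {W : Finset (Fin 4)} (h0 : 0 ∈ W)
    (hW : cost w6 W ≤ 4) : W = {0} := by
  refine eq_singleton_iff_unique_mem.2 ⟨h0, fun x hx => ?_⟩
  by_contra hx0
  have hpair : cost w6 {0, x} ≤ cost w6 W :=
    sum_le_sum_of_subset_of_nonneg (insert_subset h0 (singleton_subset_iff.2 hx))
      fun c _ _ => by fin_cases c <;> norm_num [w6]
  have hx2 : w6 x = 2 := by fin_cases x <;> simp_all [w6]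
  rw [cost, sum_pair (Ne.symm hx0), hx2, show w6 0 = 3 from rfl] at hpair
  linarith

/-- with one voter, strict preferences a ≻ b ≻ c ≻ d, L = 4 and
weights (3,2,2,2), no feasible outcome satisfies CPSC. -/
theorem no_cpsc_outcome :
    TotalPreorder pref6 ∧ TieBreak pref6 nth6 ∧
    ∀ W : Finset (Fin 4), cost w6 W ≤ 4 →
      ¬ CPSC pref6 nth6 (fun _ => (1 : ℝ)) w6 4 W := by
  refine ⟨totalPreorder_pref6, tieBreak_pref6_nth6, fun W hW => ?_⟩
  have hbc : cost w6 {1, 2} = 4 := by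
    rw [cost, sum_pair (by decide), show w6 1 = 2 from rfl, show w6 2 = 2 from rfl]
    norm_num
  by_cases h0 : (0 : Fin 4) ∈ W
  · obtain rfl := eq_singleton_zero_of_cost_w6_le h0 hW
    refine not_CPSC_of_cost_lt (solid_pref6_Iic 2) (C'' := {1, 2}) (by decide) ?_ ?_
    · rw [Pset_pref6_Iic, hbc]
      norm_num [cost, w6]
    · exact hbc.trans_le (by norm_num)
  · refine not_CPSC_of_cost_lt (solid_pref6_Iic 0) (C'' := {0}) (by decide) ?_ ?_
    · have hIic : Iic (0 : Fin 4) = {0} := Iic_bot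
      rw [Pset_pref6_Iic, hIic]
      simp [h0, cost, w6]
    · norm_num [cost, w6]
end
end

section
/- For multi-winner voting with weak ordinal preferences, a committee W of size k satisfies CPSC if and only if it satisfies generalised PSC. -/
open Finset
open scoped Classical

noncomputable section

/-- Generalised PSC for multi-winner voting with weak preferences. -/
def GenPSC {V C : Type} [Fintype V] [Fintype C] (pref : V → C → C → Prop)
    (nth : V → ℕ → C) (k : ℕ) (W : Finset C) : Prop :=
  ∀ ℓ : ℕ, 0 < ℓ → ∀ (N' : Finset V) (C' : Finset C), Solid pref N' C' →
    (ℓ * Fintype.card V : ℝ) / k ≤ N'.card →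
    ∃ Cs ⊆ W, min ℓ C'.card ≤ Cs.card ∧
      ∀ c'' ∈ Cs, ∃ i ∈ N', pref i c'' (nth i (C'.card - 1))

/-- for multi-winner voting (unit costs, unit voter budgets, L = k),
CPSC is equivalent to generalised PSC. -/
theorem cpsc_iff_genpsc {V C : Type} [Fintype V] [Fintype C] [Nonempty V]
    (pref : V → C → C → Prop) (nth : V → ℕ → C) (k : ℕ)
    (hpref : TotalPreorder pref) (hnth : TieBreak pref nth) (hk : 0 < k)
    (W : Finset C) (hW : W.card = k) :
    CPSC pref nth (fun _ => (1 : ℝ)) (fun _ => (1 : ℝ)) (k : ℝ) W ↔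
      GenPSC pref nth k W := by
  have n_pos : (0:ℝ) < (Fintype.card V : ℝ) := by exact_mod_cast Fintype.card_pos
  have k_pos : (0:ℝ) < (k:ℝ) := by exact_mod_cast hk
  have hcost : ∀ S : Finset C, cost (fun _ => (1:ℝ)) S = S.card := by
    intro S; simp [cost]
  have hsum : ∀ N' : Finset V, (∑ _i ∈ N', (1:ℝ)) = N'.card := by
    intro N'; simp
  constructor
  · intro hC ℓ hℓ N' C' hsolid hsize
    by_cases hle : min ℓ C'.card ≤ (Pset pref nth N' C' ∩ W).card
    · refine ⟨Pset pref nth N' C' ∩ W, inter_subset_right, hle, ?_⟩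
      intro c hc
      have := (mem_inter.mp hc).1
      simpa [Pset] using this
    · exfalso
      push_neg at hle
      obtain ⟨C'', hsub, hcard⟩ := Finset.exists_subset_card_eq (s := C')
        (min_le_right _ _)
      have hℓbound : (ℓ:ℝ) ≤ (N'.card : ℝ) * k / (Fintype.card V : ℝ) := by
        rw [le_div_iff₀ n_pos]
        have := (div_le_iff₀ k_pos).mp hsize
        linarith
      have hC''le : (C''.card : ℝ) ≤ (N'.card : ℝ) * k / (Fintype.card V : ℝ) := by
        have : (C''.card : ℝ) ≤ (ℓ:ℝ) := by
          rw [hcard]; exact_mod_cast min_le_left _ _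
        linarith
      have hPlt : ((Pset pref nth N' C' ∩ W).card : ℝ) < (C''.card : ℝ) := by
        exact_mod_cast hcard ▸ hle
      exact hC ⟨N', C', hsolid,
        by rw [hcost, hsum]; linarith,
        C'', hsub, by rw [hcost, hcost]; linarith,
        by rw [hcost, hsum]; linarith⟩
  · intro hG
    rintro ⟨N', C', hsolid, hlt, C'', hsub, hlt2, hle2⟩
    simp only [hcost, hsum] at hlt2 hle2
    have hℓpos : 0 < C''.card := by
      have : (0:ℝ) < (C''.card:ℝ) := lt_of_le_of_lt (Nat.cast_nonneg _) hlt2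
      exact_mod_cast this
    have hsize : ((C''.card : ℝ) * Fintype.card V) / k ≤ N'.card := by
      rw [div_le_iff₀ k_pos]
      exact (le_div_iff₀ n_pos).mp hle2
    obtain ⟨Cs, hCsW, hmin, hprop⟩ := hG C''.card hℓpos N' C' hsolid hsize
    have hminval : min C''.card C'.card = C''.card :=
      min_eq_left (card_le_card hsub)
    have hCsP : Cs ⊆ Pset pref nth N' C' ∩ W := by
      intro c hc
      refine mem_inter.mpr ⟨?_, hCsW hc⟩
      simp only [Pset, mem_filter, mem_univ, true_and]
      exact hprop c hc
    have : (C''.card : ℝ) ≤ ((Pset pref nth N' C' ∩ W).card : ℝ) := by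
      have h1 : C''.card ≤ Cs.card := hminval ▸ hmin
      have h2 : Cs.card ≤ (Pset pref nth N' C' ∩ W).card := card_le_card hCsP
      exact_mod_cast le_trans h1 h2
    linarith
end
end

section
/- For multi-winner voting with weak ordinal preferences, any committee W of size k satisfying IPSC also satisfies CPSC (equivalently, generalised PSC). -/
open Finset
open scoped Classical

noncomputable section

/-- for multi-winner voting (unit costs, unit voter budgets, L = k),
IPSC implies CPSC (equivalently, generalised PSC). -/
theorem ipsc_implies_cpsc_multiwinner {V C : Type} [Fintype V] [Fintype C] [Nonempty V]
    (pref : V → C → C → Prop) (nth : V → ℕ → C) (k : ℕ)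
    (hpref : TotalPreorder pref) (hnth : TieBreak pref nth) (hk : 0 < k)
    (W : Finset C) (hW : W.card = k)
    (hIPSC : IPSC pref nth (fun _ => (1 : ℝ)) (fun _ => (1 : ℝ)) (k : ℝ) W) :
    CPSC pref nth (fun _ => (1 : ℝ)) (fun _ => (1 : ℝ)) (k : ℝ) W := by
  rintro ⟨N', C', hsolid, h1, C'', hsub, h2, h3⟩
  have hcost : ∀ S : Finset C, cost (fun _ => (1 : ℝ)) S = (S.card : ℝ) := by
    intro S; simp [cost]
  rw [hcost, hcost] at h2
  have hcard : (Pset pref nth N' C' ∩ W).card < C''.card := by exact_mod_cast h2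
  have hnotsub : ¬ C'' ⊆ Pset pref nth N' C' ∩ W := fun h =>
    absurd (Finset.card_le_card h) (by omega)
  obtain ⟨c, hcC'', hcnot⟩ := Finset.not_subset.mp hnotsub
  refine hIPSC ⟨N', C', hsolid, h1, c, hsub hcC'', hcnot, ?_⟩
  rw [hcost]
  calc ((insert c (Pset pref nth N' C' ∩ W)).card : ℝ)
      = ((Pset pref nth N' C' ∩ W).card + 1 : ℕ) := by
        rw [Finset.card_insert_of_notMem hcnot]
    _ ≤ (C''.card : ℕ) := by exact_mod_cast hcard
    _ = cost (fun _ => (1 : ℝ)) C'' := (hcost C'').symm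
    _ ≤ _ := h3
end
end

section
/- For multi-winner approval voting, every committee W of size k satisfying IPSC also satisfies Proportional Justified Representation (PJR). -/
open Finset
open scoped Classical

noncomputable section

/-- Proportional Justified Representation for multi-winner approval voting. -/
def PJR {V C : Type} [Fintype V] [Fintype C] (A : V → Finset C) (k : ℕ) (W : Finset C) : Prop :=
  ∀ ℓ : ℕ, 0 < ℓ → ℓ ≤ k →
    ¬ ∃ Ns : Finset V, (ℓ * Fintype.card V : ℝ) / k ≤ Ns.card ∧
      ℓ ≤ (interA A Ns).card ∧ (unionA A Ns ∩ W).card < ℓ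

/-- Extended Justified Representation for multi-winner approval voting. -/
def EJR {V C : Type} [Fintype V] [Fintype C] (A : V → Finset C) (k : ℕ) (W : Finset C) : Prop :=
  ∀ ℓ : ℕ, 0 < ℓ → ℓ ≤ k →
    ¬ ∃ Ns : Finset V, (ℓ * Fintype.card V : ℝ) / k ≤ Ns.card ∧
      ℓ ≤ (interA A Ns).card ∧ ∀ i ∈ Ns, (A i ∩ W).card < ℓ

/-- IPSC in its approval-ballot form. -/
def IPSCapp {V C : Type} [Fintype V] [Fintype C] (A : V → Finset C)
    (b : V → ℝ) (w : C → ℝ) (L : ℝ) (W : Finset C) : Prop :=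
  Exhaustive w L W ∧
  ¬ ∃ N' : Finset V,
      cost w (unionA A N' ∩ W) < (∑ i ∈ N', b i) * L / (Fintype.card V : ℝ) ∧
      ∃ c ∈ interA A N', c ∉ unionA A N' ∩ W ∧
        cost w (insert c (unionA A N' ∩ W)) ≤ (∑ i ∈ N', b i) * L / (Fintype.card V : ℝ)

/-- for multi-winner approval voting (unit costs, unit budgets,
L = k), IPSC implies PJR. -/
theorem ipsc_implies_pjr {V C : Type} [Fintype V] [Fintype C] [Nonempty V]
    (A : V → Finset C) (k : ℕ) (hk : 0 < k) (W : Finset C) (hW : W.card = k)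
    (hIPSC : IPSCapp A (fun _ => (1 : ℝ)) (fun _ => (1 : ℝ)) (k : ℝ) W) :
    PJR A k W := by
  intro ℓ hℓ hℓk
  rintro ⟨Ns, hNs, hInter, hUnion⟩
  obtain ⟨_, hI⟩ := hIPSC
  apply hI
  have hn : (0:ℝ) < Fintype.card V := by
    exact_mod_cast Fintype.card_pos
  have hkpos : (0:ℝ) < k := by exact_mod_cast hk
  have hbound : (ℓ : ℝ) ≤ (∑ _i ∈ Ns, (1:ℝ)) * k / (Fintype.card V : ℝ) := by
    rw [Finset.sum_const, nsmul_eq_mul, mul_one]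
    rw [le_div_iff₀ hn]
    rw [div_le_iff₀ hkpos] at hNs
    nlinarith [hNs]
  have hcostU : cost (fun _ => (1:ℝ)) (unionA A Ns ∩ W) = ((unionA A Ns ∩ W).card : ℝ) := by
    simp [cost]
  have hlt : ((unionA A Ns ∩ W).card : ℝ) < (ℓ : ℝ) := by exact_mod_cast hUnion
  obtain ⟨c, hcI, hcU⟩ : ∃ c ∈ interA A Ns, c ∉ unionA A Ns ∩ W := by
    by_contra h
    push_neg at h
    exact absurd (Finset.card_le_card h) (by omega)
  refine ⟨Ns, ?_, c, hcI, hcU, ?_⟩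
  · rw [hcostU]; linarith
  · have : cost (fun _ => (1:ℝ)) (insert c (unionA A Ns ∩ W))
        = ((insert c (unionA A Ns ∩ W)).card : ℝ) := by simp [cost]
    rw [this, Finset.card_insert_of_notMem hcU]
    have : ((unionA A Ns ∩ W).card : ℝ) + 1 ≤ (ℓ : ℝ) := by exact_mod_cast hUnion
    push_cast
    linarith
end
end

section
/- For multi-winner approval voting, PJR does not imply IPSC: in the instance with 12 voters where voters 1–3 approve {a,x}, voters 4–6 approve {a,y}, and voters 7–12 approve {u,v,w,x,y,z}, with k = 6, the committee {u,v,w,x,y,z} satisfies PJR but violates IPSC. -/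
open Finset
open scoped Classical

noncomputable section

/-- candidates a=0, u=1, v=2, w=3, x=4, y=5, z=6; voters 1-3 approve {a,x},
voters 4-6 approve {a,y}, voters 7-12 approve {u,v,w,x,y,z}. -/
def A12 : Fin 12 → Finset (Fin 7) := fun i =>
  if (i : ℕ) < 3 then {0, 4} else if (i : ℕ) < 6 then {0, 5} else {1, 2, 3, 4, 5, 6}

/-! The committee even satisfies EJR. Voters 7–12 have all six of their candidates elected and
voters 1–6 one each, so a group violating EJR for some `ℓ ≤ 6` has `ℓ ≥ 2` and consists of voters
1–6 only; having at least `2ℓ ≥ 4` members it meets both blocks `{a, x}` and `{a, y}`, so its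
members agree only on `a`. On the other hand voters 1–6 are entitled to three seats, have only
`x` and `y`, and unanimously approve the unelected `a`: a violation of IPSC. -/

theorem cost_one {C : Type} (S : Finset C) : cost (fun _ => (1 : ℝ)) S = S.card := by
  simp [cost]

section Approval

variable {V C : Type} [Fintype C] {A : V → Finset C} {N' : Finset V} {i : V}

@[simp]
theorem mem_unionA {c : C} : c ∈ unionA A N' ↔ ∃ i ∈ N', c ∈ A i := by
  simp [unionA]

@[simp]
theorem mem_interA {c : C} : c ∈ interA A N' ↔ ∀ i ∈ N', c ∈ A i := by
  simp [interA]

theorem subset_unionA (hi : i ∈ N') : A i ⊆ unionA A N' :=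
  fun _ hc => mem_unionA.2 ⟨i, hi, hc⟩

theorem interA_subset (hi : i ∈ N') : interA A N' ⊆ A i :=
  fun _ hc => mem_interA.1 hc i hi

theorem subset_of_card_le_card_interA {j : V} (hi : i ∈ N') (hj : j ∈ N')
    (hcard : (A i).card ≤ (interA A N').card) : A i ⊆ A j := by
  rw [← Finset.eq_of_subset_of_card_le (interA_subset hi) hcard]
  exact interA_subset hj

theorem PJR_of_EJR [Fintype V] {k : ℕ} {W : Finset C} (h : EJR A k W) : PJR A k W := by
  rintro ℓ hℓ hℓk ⟨Ns, hsize, hcoh, hunder⟩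
  exact h ℓ hℓ hℓk ⟨Ns, hsize, hcoh, fun i hi =>
    (Finset.card_le_card (Finset.inter_subset_inter_right (subset_unionA hi))).trans_lt hunder⟩

theorem not_IPSCapp_of_witness [Fintype V] {L : ℝ} {W S : Finset C} {c : C}
    (hS : unionA A N' ∩ W ⊆ S) (hc : c ∈ interA A N') (hcS : c ∉ S)
    (hshare : (S.card + 1 : ℝ) ≤ N'.card * L / Fintype.card V) :
    ¬ IPSCapp A (fun _ => 1) (fun _ => 1) L W := by
  rintro ⟨-, hno⟩
  have hcW : c ∉ unionA A N' ∩ W := fun h => hcS (hS h)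
  have hcard : ((unionA A N' ∩ W).card : ℝ) ≤ S.card := by exact_mod_cast Finset.card_le_card hS
  refine hno ⟨N', ?_, c, hc, hcW, ?_⟩ <;>
    simp only [cost_one, Finset.sum_const, nsmul_eq_mul, mul_one,
      Finset.card_insert_of_notMem hcW, Nat.cast_add, Nat.cast_one] <;>
    linarith

end Approval

theorem card_A12_inter_committee (i : Fin 12) :
    (A12 i ∩ {1, 2, 3, 4, 5, 6}).card = if (i : ℕ) < 6 then 1 else 6 := by
  revert i; decide

theorem card_A12_of_lt_six {i : Fin 12} (hi : (i : ℕ) < 6) : (A12 i).card = 2 := by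
  revert i; decide

/-- Each of voters 1–6 shares its ballot only with the two others of its group. -/
theorem card_le_three_of_forall_A12_subset {i : Fin 12} (hi : (i : ℕ) < 6)
    {Ns : Finset (Fin 12)} (hNs : ∀ j ∈ Ns, A12 i ⊆ A12 j) : Ns.card ≤ 3 := by
  have hgroup : (Finset.univ.filter fun j => A12 i ⊆ A12 j).card = 3 := by
    clear hNs; revert i; decide
  exact hgroup ▸ Finset.card_le_card fun j hj => Finset.mem_filter.2 ⟨Finset.mem_univ j, hNs j hj⟩

theorem EJR_A12 : EJR A12 6 ({1, 2, 3, 4, 5, 6} : Finset (Fin 7)) := by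
  rintro ℓ hℓ hℓk ⟨Ns, hsize, hcoh, hunder⟩
  have hNs : 2 * ℓ ≤ Ns.card := by
    rw [Fintype.card_fin] at hsize
    exact_mod_cast (show ((2 * ℓ : ℕ) : ℝ) ≤ Ns.card by push_cast; linarith)
  obtain ⟨i, hi⟩ := Finset.card_pos.1 (show 0 < Ns.card by omega)
  -- `convert` bridges the classical `DecidableEq` instance inside `EJR`
  have hsat : (A12 i ∩ {1, 2, 3, 4, 5, 6}).card < ℓ := by convert hunder i hi
  rw [card_A12_inter_committee] at hsat
  -- `i` is among voters 1–6, and then `ℓ ≥ 2 = |A12 i|`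
  have hi6 : (i : ℕ) < 6 := by by_contra h; rw [if_neg h] at hsat; omega
  rw [if_pos hi6] at hsat
  have hall := card_le_three_of_forall_A12_subset hi6 fun j hj =>
    subset_of_card_le_card_interA hi hj (by rw [card_A12_of_lt_six hi6]; omega)
  omega

/-- with k = 6, the committee {u,v,w,x,y,z} satisfies PJR but
violates IPSC. -/
theorem pjr_not_implies_ipsc :
    PJR A12 6 ({1, 2, 3, 4, 5, 6} : Finset (Fin 7)) ∧
    ¬ IPSCapp A12 (fun _ => (1 : ℝ)) (fun _ => (1 : ℝ)) 6
        ({1, 2, 3, 4, 5, 6} : Finset (Fin 7)) := by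
  refine ⟨PJR_of_EJR EJR_A12, not_IPSCapp_of_witness (c := 0)
    (N' := ({0, 1, 2, 3, 4, 5} : Finset (Fin 12))) (S := ({4, 5} : Finset (Fin 7)))
    ?_ ?_ (by decide) (by simp; norm_num)⟩
  · intro c hc
    simp only [Finset.mem_inter, mem_unionA] at hc
    revert c; decide
  · rw [mem_interA]; decide
end
end

section
/- For multi-winner voting with strict preferences, a committee W of size k satisfies CPSC if and only if it satisfies Dummett's PSC: for every positive integer ℓ and every solid coalition N' with |N'| ≥ ℓn/k supporting a set C', the committee contains at least min{ℓ, |C'|} candidates from C'. -/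
open Finset
open scoped Classical

noncomputable section

lemma cost_one_eq_card {C : Type} (S : Finset C) :
    cost (fun _ => (1 : ℝ)) S = (S.card : ℝ) := by
  simp [cost]

/-- With strict preferences, `Pset N' C' = C'` for a nonempty solid coalition. -/
lemma pset_eq_of_solid {V C : Type} [Fintype C]
    (pref : V → C → C → Prop) (nth : V → ℕ → C)
    (hstrict : ∀ i a c, pref i a c → pref i c a → a = c)
    (hnth : TieBreak pref nth)
    (N' : Finset V) (C' : Finset C) (hS : Solid pref N' C')
    (hN : N'.Nonempty) (hC : C'.Nonempty) :
    Pset pref nth N' C' = C' := by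
  obtain ⟨i0, hi0⟩ := hN
  -- membership of early positions
  have hmem : ∀ i ∈ N', ∀ j < C'.card, nth i j ∈ C' := by
    intro i hi j hj
    by_cases hall : ∀ c' ∈ C', ∃ j' < C'.card, nth i j' = c'
    · have hsub : C' ⊆ (Finset.range C'.card).image (nth i) := by
        intro c hc
        obtain ⟨j', hj', hj'e⟩ := hall c hc
        exact Finset.mem_image.2 ⟨j', Finset.mem_range.2 hj', hj'e⟩
      have hcard : ((Finset.range C'.card).image (nth i)).card ≤ C'.card := by
        calc ((Finset.range C'.card).image (nth i)).card
            ≤ (Finset.range C'.card).card := Finset.card_image_le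
          _ = C'.card := Finset.card_range _
      have heq := Finset.eq_of_subset_of_card_le hsub hcard
      rw [heq]
      exact Finset.mem_image.2 ⟨j, Finset.mem_range.2 hj, rfl⟩
    · push_neg at hall
      obtain ⟨c', hc', hc'pos⟩ := hall
      obtain ⟨j', hj'lt, hj'e⟩ := hnth.1 i c'
      have hj'ge : C'.card ≤ j' := by
        by_contra h
        push_neg at h
        exact hc'pos j' h hj'e
      by_contra hnot
      have h1 : pref i (nth i j) c' := by
        have := hnth.2 i j j' (le_trans (le_of_lt hj) hj'ge)
        rwa [hj'e] at this
      have h2 : pref i c' (nth i j) := hS i hi c' hc' _ hnot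
      exact hc'pos j hj ((hstrict i _ _ h1 h2).symm ▸ hj'e ▸ rfl)
  -- injectivity on positions below card C
  have hinj : ∀ i : V, ∀ j j', j < Fintype.card C → j' < Fintype.card C →
      nth i j = nth i j' → j = j' := by
    intro i j j' hj hj' he
    have hsurj : Function.Surjective (fun m : Fin (Fintype.card C) => nth i m) := by
      intro c
      obtain ⟨m, hm, hme⟩ := hnth.1 i c
      exact ⟨⟨m, hm⟩, hme⟩
    have hbij : Function.Bijective (fun m : Fin (Fintype.card C) => nth i m) :=
      (Fintype.bijective_iff_surjective_and_card _).2 ⟨hsurj, by simp⟩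
    have := hbij.1 (a₁ := ⟨j, hj⟩) (a₂ := ⟨j', hj'⟩) he
    exact Fin.mk.inj_iff.1 this
  -- the image of positions 0..|C'|-1 is exactly C'
  have himg : ∀ i ∈ N', (Finset.range C'.card).image (nth i) = C' := by
    intro i hi
    have hsub : (Finset.range C'.card).image (nth i) ⊆ C' := by
      intro c hc
      obtain ⟨j, hj, hje⟩ := Finset.mem_image.1 hc
      exact hje ▸ hmem i hi j (Finset.mem_range.1 hj)
    have hCle : C'.card ≤ Fintype.card C := Finset.card_le_univ C'
    have hcard : ((Finset.range C'.card).image (nth i)).card = C'.card := by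
      rw [Finset.card_image_of_injOn, Finset.card_range]
      intro a ha b hb he
      exact hinj i a b (lt_of_lt_of_le (Finset.mem_range.1 ha) hCle)
        (lt_of_lt_of_le (Finset.mem_range.1 hb) hCle) he
    exact Finset.eq_of_subset_of_card_le hsub hcard.ge
  have hlast : ∀ i ∈ N', nth i (C'.card - 1) ∈ C' := by
    intro i hi
    exact hmem i hi _ (Nat.sub_lt (Finset.card_pos.2 hC) one_pos)
  ext c
  simp only [Pset, Finset.mem_filter, Finset.mem_univ, true_and]
  constructor
  · rintro ⟨i, hi, hp⟩
    by_contra hc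
    have h2 : pref i (nth i (C'.card - 1)) c := hS i hi _ (hlast i hi) c hc
    have := hstrict i c _ hp h2
    exact hc (this ▸ hlast i hi)
  · intro hc
    refine ⟨i0, hi0, ?_⟩
    have : c ∈ (Finset.range C'.card).image (nth i0) := (himg i0 hi0).symm ▸ hc
    obtain ⟨j, hj, hje⟩ := Finset.mem_image.1 this
    have hjle : j ≤ C'.card - 1 := Nat.le_sub_one_of_lt (Finset.mem_range.1 hj)
    exact hje ▸ hnth.2 i0 j _ hjle

/-- for multi-winner voting with strict preferences (unit costs,
unit budgets, L = k), CPSC is equivalent to Dummett's PSC. -/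
theorem cpsc_iff_dummett_psc {V C : Type} [Fintype V] [Fintype C] [Nonempty V]
    (pref : V → C → C → Prop) (nth : V → ℕ → C) (k : ℕ)
    (hpref : TotalPreorder pref)
    (hstrict : ∀ i a c, pref i a c → pref i c a → a = c)
    (hnth : TieBreak pref nth) (hk : 0 < k)
    (W : Finset C) (hW : W.card = k) :
    CPSC pref nth (fun _ => (1 : ℝ)) (fun _ => (1 : ℝ)) (k : ℝ) W ↔
      (∀ ℓ : ℕ, 0 < ℓ → ∀ (N' : Finset V) (C' : Finset C), Solid pref N' C' →
        (ℓ * Fintype.card V : ℝ) / k ≤ N'.card →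
        min ℓ C'.card ≤ (W ∩ C').card) := by
  have hn : (0 : ℝ) < Fintype.card V := by
    exact_mod_cast Fintype.card_pos
  have hkr : (0 : ℝ) < k := by exact_mod_cast hk
  constructor
  · -- CPSC → Dummett
    intro hcpsc ℓ hℓ N' C' hsolid hge
    by_contra hlt
    push_neg at hlt
    set m := min ℓ C'.card with hm
    have hm0 : 0 < m := lt_of_le_of_lt (Nat.zero_le _) hlt
    have hCne : C'.Nonempty := Finset.card_pos.1 (lt_of_lt_of_le hm0 (min_le_right _ _))
    have hNne : N'.Nonempty := by
      rw [← Finset.card_pos]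
      by_contra h
      push_neg at h
      interval_cases h' : N'.card
      · simp only [h', Nat.cast_zero] at hge
        have : (0 : ℝ) < (ℓ * Fintype.card V : ℝ) / k := by
          apply div_pos _ hkr
          exact mul_pos (by exact_mod_cast hℓ) hn
        linarith
    have hP : Pset pref nth N' C' = C' :=
      pset_eq_of_solid pref nth hstrict hnth N' C' hsolid hNne hCne
    obtain ⟨C'', hsub, hcard⟩ := Finset.exists_subset_card_eq (min_le_right ℓ C'.card)
    -- key real inequalities
    have hℓle : (ℓ : ℝ) ≤ (N'.card : ℝ) * k / (Fintype.card V : ℝ) := by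
      rw [le_div_iff₀ hn]
      rw [div_le_iff₀ hkr] at hge
      linarith
    have hmle : (m : ℝ) ≤ (ℓ : ℝ) := by exact_mod_cast min_le_left ℓ C'.card
    refine hcpsc ⟨N', C', hsolid, ?_, C'', hsub, ?_, ?_⟩
    · rw [cost_one_eq_card, hP, Finset.inter_comm]
      simp only [Finset.sum_const, nsmul_eq_mul, mul_one]
      have : ((W ∩ C').card : ℝ) < m := by exact_mod_cast hlt
      linarith
    · rw [cost_one_eq_card, cost_one_eq_card, hP, Finset.inter_comm, hcard]
      exact_mod_cast hlt
    · rw [cost_one_eq_card, hcard]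
      simp only [Finset.sum_const, nsmul_eq_mul, mul_one]
      linarith
  · -- Dummett → CPSC
    rintro hD ⟨N', C', hsolid, h1, C'', hsub, h2, h3⟩
    rw [cost_one_eq_card, cost_one_eq_card] at h2
    rw [cost_one_eq_card] at h3
    simp only [Finset.sum_const, nsmul_eq_mul, mul_one] at h1 h3
    set ℓ := C''.card with hℓdef
    have hℓ0 : 0 < ℓ := by
      rw [Finset.card_pos]
      by_contra h
      rw [Finset.not_nonempty_iff_eq_empty] at h
      rw [hℓdef, h] at h2
      simp at h2
      have : (0 : ℝ) ≤ ((Pset pref nth N' C' ∩ W).card : ℝ) := Nat.cast_nonneg _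
      linarith
    have hge : (ℓ * Fintype.card V : ℝ) / k ≤ N'.card := by
      rw [div_le_iff₀ hkr]
      rw [le_div_iff₀ hn] at h3
      linarith
    have hNne : N'.Nonempty := by
      rw [← Finset.card_pos]
      by_contra h
      push_neg at h
      interval_cases h' : N'.card
      · simp only [h', Nat.cast_zero] at hge
        have : (0 : ℝ) < (ℓ * Fintype.card V : ℝ) / k := by
          apply div_pos _ hkr
          exact mul_pos (by exact_mod_cast hℓ0) hn
        linarith
    have hCne : C'.Nonempty := by
      obtain ⟨c, hc⟩ := Finset.card_pos.1 hℓ0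
      exact ⟨c, hsub hc⟩
    have hP : Pset pref nth N' C' = C' :=
      pset_eq_of_solid pref nth hstrict hnth N' C' hsolid hNne hCne
    have hmin : min ℓ C'.card = ℓ := min_eq_left (Finset.card_le_card hsub)
    have hdum := hD ℓ hℓ0 N' C' hsolid hge
    rw [hmin] at hdum
    rw [hP, Finset.inter_comm] at h2
    have : ((W ∩ C').card : ℝ) < ℓ := h2
    have h4 : (W ∩ C').card < ℓ := by exact_mod_cast this
    exact absurd hdum (not_le.2 h4)
end
end
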